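/- arXiv:2208.05629 — 8 statements merged into one kernel-verified Lean document; each statement's English description precedes it below -/
import Mathlib

section
/- For all positive reals a and b, (a-b)(log a - log b) ≥ (a-b)²/(a+b). -/
/-!
Since `log t ≥ 1 - 1/t`, the difference `log a - log b` has the sign of `a - b` and size at least
`|a - b| / max a b`; hence `(a - b)(log a - log b) ≥ (a - b)² / max a b ≥ (a - b)² / (a + b)`.
-/

open Real

theorem sub_div_le_log_sub_log {a b : ℝ} (ha : 0 < a) (hb : 0 < b) :
    (a - b) / a ≤ log a - log b := by
  have h := one_sub_inv_le_log_of_pos (div_pos ha hb)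
  rwa [log_div ha.ne' hb.ne', inv_div, ← div_self ha.ne', ← sub_div] at h

theorem sq_div_max_le_sub_mul_log_sub_log {a b : ℝ} (ha : 0 < a) (hb : 0 < b) :
    (a - b) ^ 2 / max a b ≤ (a - b) * (log a - log b) := by
  wlog hba : b ≤ a generalizing a b
  · have h := this hb ha (le_of_not_ge hba)
    rwa [max_comm, ← neg_sub a b, neg_sq, ← neg_sub (log a), neg_mul_neg] at h
  calc (a - b) ^ 2 / max a b = (a - b) * ((a - b) / a) := by
        rw [max_eq_left hba]; ring
    _ ≤ (a - b) * (log a - log b) :=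
        mul_le_mul_of_nonneg_left (sub_div_le_log_sub_log ha hb) (sub_nonneg.2 hba)

theorem log_diff_ge_sq_div_sum (a b : ℝ) (ha : 0 < a) (hb : 0 < b) :
    (a - b) * (Real.log a - Real.log b) ≥ (a - b)^2 / (a + b) := by
  have hmax : max a b ≤ a + b := max_le_add_of_nonneg ha.le hb.le
  calc (a - b) ^ 2 / (a + b) ≤ (a - b) ^ 2 / max a b :=
        div_le_div_of_nonneg_left (sq_nonneg _) (lt_max_of_lt_left ha) hmax
    _ ≤ (a - b) * (log a - log b) := sq_div_max_le_sub_mul_log_sub_log ha hb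
end

section
/- For all positive reals a and b, (a-b)(log a - log b) ≥ (√a - √b)². -/
lemma aux_log_sqrt (a b : ℝ) (ha : 0 < a) (hb : 0 < b) (hab : b ≤ a) :
    (a - b) * (Real.log a - Real.log b) ≥ (Real.sqrt a - Real.sqrt b)^2 := by
  have hlog : (Real.log a - Real.log b) * a ≥ a - b := by
    have h := Real.log_le_sub_one_of_pos (show 0 < b / a by positivity)
    rw [Real.log_div hb.ne' ha.ne'] at h
    have h2 : (b / a) * a = b := by field_simp
    nlinarith
  have hsa : Real.sqrt a ^ 2 = a := Real.sq_sqrt ha.le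
  have hsb : Real.sqrt b ^ 2 = b := Real.sq_sqrt hb.le
  have hsa0 : 0 ≤ Real.sqrt a := Real.sqrt_nonneg a
  have hsb0 : 0 ≤ Real.sqrt b := Real.sqrt_nonneg b
  have hL : 0 ≤ Real.log a - Real.log b := by
    have := Real.log_le_log hb hab
    linarith
  nlinarith [mul_nonneg (mul_nonneg hsa0 hsb0) hL, sq_nonneg (Real.sqrt a - Real.sqrt b),
    mul_nonneg hsb0 (sq_nonneg (Real.sqrt a - Real.sqrt b)),
    mul_le_mul_of_nonneg_left hlog hL]

theorem log_diff_ge_sqrt_diff_sq (a b : ℝ) (ha : 0 < a) (hb : 0 < b) :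
    (a - b) * (Real.log a - Real.log b) ≥ (Real.sqrt a - Real.sqrt b)^2 := by
  rcases le_total b a with h | h
  · exact aux_log_sqrt a b ha hb h
  · have := aux_log_sqrt b a hb ha h
    calc (Real.sqrt a - Real.sqrt b)^2 = (Real.sqrt b - Real.sqrt a)^2 := by ring
    _ ≤ (b - a) * (Real.log b - Real.log a) := this
    _ = (a - b) * (Real.log a - Real.log b) := by ring
end

section
/- For all reals a, b with a ≥ 0, b > 0, and M ≥ 2, if a ≥ M·b then (a-b)·log(a/b) ≥ (1/2)·a·log M. -/
theorem log_ratio_lower_bound (a b M : ℝ) (ha : 0 ≤ a) (hb : 0 < b) (hM : 2 ≤ M)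
    (hab : a ≥ M * b) :
    (a - b) * Real.log (a / b) ≥ (1 / 2) * a * Real.log M := by
  have h2b : 2 * b ≤ a := le_trans (by nlinarith) hab
  have h1 : 1 / 2 * a ≤ a - b := by linarith
  have hMpos : (0:ℝ) < M := by linarith
  have h2 : Real.log M ≤ Real.log (a / b) := by
    apply Real.log_le_log hMpos
    rw [le_div_iff₀ hb]; linarith
  have hlogM : 0 ≤ Real.log M := Real.log_nonneg (by linarith)
  calc (1 / 2) * a * Real.log M ≤ (a - b) * Real.log (a / b) :=
        mul_le_mul h1 h2 hlogM (by linarith)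
end

section
/- For any nonnegative summable sequence p : ℕ → ℝ with ∑ p_n = 1 and ∑ n·p_n < ∞, the operator L satisfies ∑_{n≥0} n·L[p]_n = 0, i.e. L preserves the mean. -/
/-- The unbiased-exchange operator. -/
noncomputable def Lop (p : ℕ → ℝ) : ℕ → ℝ := fun n : ℕ =>
  if n = 0 then p 1 - (1 - p 0) * p 0
  else p (n + 1) + (1 - p 0) * p (n - 1) - (1 + (1 - p 0)) * p n

theorem Lop_preserves_mean (p : ℕ → ℝ) (hpos : ∀ n, 0 ≤ p n)
    (hsum : Summable p) (htot : ∑' n : ℕ, p n = 1)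
    (hmean : Summable (fun n : ℕ => (n : ℝ) * p n)) :
    ∑' n : ℕ, (n : ℝ) * Lop p n = 0 := by
  set r : ℝ := 1 - p 0 with hr
  set M : ℝ := ∑' n : ℕ, (n : ℝ) * p n with hM
  -- summability of shifted sequences
  have hmean' : Summable (fun n : ℕ => ((n + 1 : ℕ) : ℝ) * p (n + 1)) :=
    (summable_nat_add_iff 1).2 hmean
  have hsum' : Summable (fun n : ℕ => p (n + 1)) := (summable_nat_add_iff 1).2 hsum
  have h1 : Summable (fun n : ℕ => ((n : ℝ) + 1) * p n) := by
    have := hmean.add hsum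
    simpa [add_mul, one_mul] using this
  have hA : Summable (fun n : ℕ => (n : ℝ) * p (n + 1)) := by
    have := hmean'.sub hsum'
    apply this.congr
    intro n
    push_cast
    ring
  have hB : Summable (fun n : ℕ => (n : ℝ) * p (n - 1)) := by
    apply (summable_nat_add_iff 1).1
    apply h1.congr
    intro n
    simp
  -- values of shifted sums
  have SA : ∑' n : ℕ, (n : ℝ) * p (n + 1) = M - r := by
    have e1 : M = ∑' n : ℕ, ((n + 1 : ℕ) : ℝ) * p (n + 1) := by
      rw [hM]; simpa using Summable.tsum_eq_zero_add hmean
    have e2 : (1 : ℝ) = p 0 + ∑' n : ℕ, p (n + 1) := by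
      rw [← htot]; exact Summable.tsum_eq_zero_add hsum
    have e3 : ∑' n : ℕ, (n : ℝ) * p (n + 1)
        = (∑' n : ℕ, ((n + 1 : ℕ) : ℝ) * p (n + 1)) - ∑' n : ℕ, p (n + 1) := by
      rw [← Summable.tsum_sub hmean' hsum']
      apply tsum_congr
      intro n
      push_cast
      ring
    rw [e3]
    have := e1
    have := e2
    rw [hr]
    linarith
  have SB : ∑' n : ℕ, (n : ℝ) * p (n - 1) = M + 1 := by
    have e0 : ∑' n : ℕ, (n : ℝ) * p (n - 1)
        = ∑' n : ℕ, ((n + 1 : ℕ) : ℝ) * p n := by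
      simpa using Summable.tsum_eq_zero_add hB
    have e1 : ∑' n : ℕ, ((n + 1 : ℕ) : ℝ) * p n
        = ∑' n : ℕ, ((n : ℝ) * p n + p n) := by
      apply tsum_congr
      intro n
      push_cast
      ring
    rw [e0, e1, Summable.tsum_add hmean hsum, htot]
  -- decompose the main sum
  have key : ∀ n : ℕ, (n : ℝ) * Lop p n
      = (n : ℝ) * p (n + 1) + r * ((n : ℝ) * p (n - 1)) - (1 + r) * ((n : ℝ) * p n) := by
    intro n
    cases n with
    | zero => simp [Lop]
    | succ m =>
      simp only [Lop, Nat.succ_ne_zero, if_neg]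
      push_cast
      ring
  calc ∑' n : ℕ, (n : ℝ) * Lop p n
      = ∑' n : ℕ, ((n : ℝ) * p (n + 1) + r * ((n : ℝ) * p (n - 1))
          - (1 + r) * ((n : ℝ) * p n)) := tsum_congr key
    _ = (∑' n : ℕ, ((n : ℝ) * p (n + 1) + r * ((n : ℝ) * p (n - 1))))
          - ∑' n : ℕ, (1 + r) * ((n : ℝ) * p n) := by
        exact Summable.tsum_sub (hA.add (hB.mul_left r)) (hmean.mul_left (1 + r))
    _ = (∑' n : ℕ, (n : ℝ) * p (n + 1)) + (∑' n : ℕ, r * ((n : ℝ) * p (n - 1)))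
          - (1 + r) * M := by
        rw [Summable.tsum_add hA (hB.mul_left r), tsum_mul_left, tsum_mul_left, hM]
    _ = (M - r) + r * (M + 1) - (1 + r) * M := by
        rw [SA, tsum_mul_left, SB]
    _ = 0 := by ring
end

section
/- Integration by parts formula: for p : ℕ → ℝ nonnegative summable with suitable decay, and any bounded φ : ℕ → ℝ, one has ∑_{n≥0} L[p]_n·φ(n) = ∑_{n≥0} (r̄·p_n - p_{n+1})·(φ(n+1) - φ(n)), where r̄ = 1 - p_0 and L is the unbiased-exchange operator. -/
theorem Summable.mul_of_abs_le {ι : Type*} {a φ : ι → ℝ} (ha : Summable a) {B : ℝ}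
    (hB : ∀ n, |φ n| ≤ B) : Summable fun n => a n * φ n :=
  Summable.of_norm_bounded (ha.abs.mul_right B) fun n => by
    rw [Real.norm_eq_abs, abs_mul]
    exact mul_le_mul_of_nonneg_left (hB n) (abs_nonneg _)

theorem tsum_backwardDiff_mul {a φ : ℕ → ℝ} (ha : Summable a) {B : ℝ} (hB : ∀ n, |φ n| ≤ B) :
    ∑' n, ((if n = 0 then 0 else a (n - 1)) - a n) * φ n
      = ∑' n, a n * (φ (n + 1) - φ n) := by
  have haφ : Summable fun n => a n * φ n := ha.mul_of_abs_le hB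
  have haφ_succ : Summable fun n => a n * φ (n + 1) := ha.mul_of_abs_le fun n => hB (n + 1)
  have hshift : Summable fun n => (if n = 0 then 0 else a (n - 1)) * φ n :=
    (summable_nat_add_iff 1).1 (by simpa using haφ_succ)
  calc ∑' n, ((if n = 0 then 0 else a (n - 1)) - a n) * φ n
      = ∑' n, (if n = 0 then 0 else a (n - 1)) * φ n - ∑' n, a n * φ n := by
        simp only [sub_mul]
        exact hshift.tsum_sub haφ
    _ = ∑' n, a n * φ (n + 1) - ∑' n, a n * φ n := by
        rw [hshift.tsum_eq_zero_add]
        simp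
    _ = ∑' n, a n * (φ (n + 1) - φ n) := by
        simp only [mul_sub]
        exact (haφ_succ.tsum_sub haφ).symm

noncomputable def exchangeFlux (p : ℕ → ℝ) (n : ℕ) : ℝ := (1 - p 0) * p n - p (n + 1)

theorem summable_exchangeFlux {p : ℕ → ℝ} (hp : Summable p) : Summable (exchangeFlux p) :=
  (hp.mul_left _).sub ((summable_nat_add_iff 1).2 hp)

theorem Lop_eq_backwardDiff_exchangeFlux (p : ℕ → ℝ) (n : ℕ) :
    Lop p n = (if n = 0 then 0 else exchangeFlux p (n - 1)) - exchangeFlux p n := by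
  cases n with
  | zero => simp [Lop, exchangeFlux]
  | succ m =>
    simp only [Lop, exchangeFlux, Nat.add_eq_zero_iff, one_ne_zero, and_false, ↓reduceIte,
      add_tsub_cancel_right]
    ring

theorem integration_by_parts_general (p : ℕ → ℝ)
    (hsum : Summable p)
    (φ : ℕ → ℝ) (hφ : ∃ B : ℝ, ∀ n, |φ n| ≤ B) :
    ∑' n : ℕ, Lop p n * φ n
      = ∑' n : ℕ, ((1 - p 0) * p n - p (n + 1)) * (φ (n + 1) - φ n) := by
  obtain ⟨B, hB⟩ := hφ
  simp_rw [Lop_eq_backwardDiff_exchangeFlux]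
  exact tsum_backwardDiff_mul (summable_exchangeFlux hsum) hB

theorem integration_by_parts (p : ℕ → ℝ) (hpos : ∀ n, 0 ≤ p n)
    (hsum : Summable p) (htot : ∑' n : ℕ, p n = 1)
    (hmean : Summable (fun n : ℕ => (n : ℝ) * p n))
    (φ : ℕ → ℝ) (hφ : ∃ B : ℝ, ∀ n, |φ n| ≤ B) :
    ∑' n : ℕ, Lop p n * φ n
      = ∑' n : ℕ, ((1 - p 0) * p n - p (n + 1)) * (φ (n + 1) - φ n) :=
  integration_by_parts_general p hsum φ hφ
end

section
/- If H : ℝ≥0 → ℝ>0 is differentiable with H(0) ≤ H₀, H nonincreasing, H(t) ≤ 1/e for all t, and H'(t) ≤ -c·H(t)/|log H(t)| for all t ≥ 0 with c > 0, then there exist constants C, C' > 0 depending on c and H(0) such that H(t) ≤ C·exp(-C'·√t) for all t ≥ 0. -/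
theorem almost_exponential_decay (H H' : ℝ → ℝ) (c : ℝ) (hc : 0 < c)
    (hpos : ∀ t, 0 ≤ t → 0 < H t)
    (hsmall : ∀ t, 0 ≤ t → H t ≤ 1 / Real.exp 1)
    (hmono : ∀ s t, 0 ≤ s → s ≤ t → H t ≤ H s)
    (hderiv : ∀ t, 0 ≤ t → HasDerivAt H (H' t) t)
    (hineq : ∀ t, 0 ≤ t → H' t ≤ -c * H t / |Real.log (H t)|) :
    ∃ C C' : ℝ, 0 < C ∧ 0 < C' ∧ ∀ t, 0 ≤ t →
      H t ≤ C * Real.exp (-C' * Real.sqrt t) := by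
  -- log (H t) ≤ -1
  have hlog : ∀ t, 0 ≤ t → Real.log (H t) ≤ -1 := by
    intro t ht
    have h1 : H t ≤ Real.exp (-1) := by
      rw [Real.exp_neg]
      simpa [one_div] using hsmall t ht
    calc Real.log (H t) ≤ Real.log (Real.exp (-1)) :=
          Real.log_le_log (hpos t ht) h1
      _ = -1 := Real.log_exp _
  have hlogneg : ∀ t, 0 ≤ t → Real.log (H t) < 0 := fun t ht =>
    lt_of_le_of_lt (hlog t ht) (by norm_num)
  -- the auxiliary function F t = (log H t)^2 - 2 c t
  set F : ℝ → ℝ := fun t => (Real.log (H t))^2 - 2*c*t with hF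
  set F' : ℝ → ℝ := fun t => 2 * Real.log (H t) * (H' t / H t) - 2*c with hF'
  have hFd : ∀ t, 0 ≤ t → HasDerivAt F (F' t) t := by
    intro t ht
    have h1 : HasDerivAt (fun x => Real.log (H x)) (H' t / H t) t :=
      (hderiv t ht).log (hpos t ht).ne'
    have h2 : HasDerivAt (fun x => (Real.log (H x))^2)
        (2 * Real.log (H t) * (H' t / H t)) t := by
      have := h1.pow 2
      simpa [Pi.pow_def, mul_comm, mul_assoc, mul_left_comm] using this
    simpa [Pi.sub_def, hF, hF'] using h2.sub ((hasDerivAt_id t).const_mul (2*c))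
  have hFd' : ∀ t, 0 ≤ t → 0 ≤ F' t := by
    intro t ht
    have hHpos := hpos t ht
    have hl := hlog t ht
    have hln := hlogneg t ht
    have habs : |Real.log (H t)| = -Real.log (H t) := abs_of_neg hln
    have hLne : Real.log (H t) ≠ 0 := hln.ne
    have hHr : H' t / H t ≤ c / Real.log (H t) := by
      have h1 : H' t ≤ -c * H t / |Real.log (H t)| := hineq t ht
      rw [habs, div_neg, neg_mul, neg_div, neg_neg] at h1
      have h2 : c / Real.log (H t) = c * H t / Real.log (H t) / H t := by
        field_simp
      rw [h2]
      gcongr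
    -- multiply by 2 log (H t) < 0
    have h3 : 2 * Real.log (H t) * (c / Real.log (H t)) ≤
        2 * Real.log (H t) * (H' t / H t) := by
      have h4 : (2 : ℝ) * Real.log (H t) < 0 := by linarith
      exact mul_le_mul_of_nonpos_left hHr h4.le
    have h5 : 2 * Real.log (H t) * (c / Real.log (H t)) = 2 * c := by
      field_simp
    simp only [hF']
    linarith [h5 ▸ h3]
  -- F is monotone on [0, ∞)
  have hmonoF : MonotoneOn F (Set.Ici (0:ℝ)) := by
    apply monotoneOn_of_deriv_nonneg (convex_Ici 0)
    · intro x hx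
      exact ((hFd x hx).continuousAt).continuousWithinAt
    · intro x hx
      rw [interior_Ici] at hx
      exact ((hFd x (le_of_lt hx)).differentiableAt).differentiableWithinAt
    · intro x hx
      rw [interior_Ici] at hx
      rw [(hFd x (le_of_lt hx)).deriv]
      exact hFd' x (le_of_lt hx)
  refine ⟨1, Real.sqrt (2*c), one_pos, Real.sqrt_pos.mpr (by linarith), ?_⟩
  intro t ht
  have hFt : F 0 ≤ F t := hmonoF Set.self_mem_Ici ht ht
  have h6 : 2*c*t ≤ (Real.log (H t))^2 := by
    have h0 : 0 ≤ (Real.log (H 0))^2 := sq_nonneg _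
    simp only [hF] at hFt
    nlinarith
  have h7 : Real.sqrt (2*c*t) ≤ -Real.log (H t) := by
    rw [← Real.sqrt_sq (by linarith [hlogneg t ht] : (0:ℝ) ≤ -Real.log (H t))]
    apply Real.sqrt_le_sqrt
    rw [neg_pow]
    simpa using h6
  have h8 : Real.log (H t) ≤ -(Real.sqrt (2*c) * Real.sqrt t) := by
    rw [← Real.sqrt_mul (by linarith) t]
    linarith
  calc H t = Real.exp (Real.log (H t)) := (Real.exp_log (hpos t ht)).symm
    _ ≤ Real.exp (-(Real.sqrt (2*c) * Real.sqrt t)) := Real.exp_le_exp.mpr h8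
    _ = 1 * Real.exp (-Real.sqrt (2*c) * Real.sqrt t) := by rw [one_mul, neg_mul]
end

section
/- If H : ℝ≥0 → (0, 1/e] is differentiable and satisfies H'(t) ≤ -c·H(t)²/(log H(t))² for all t ≥ 0 with c > 0, then there exists a constant C > 0 (depending on c and H(0)) such that H(t) ≤ C·(log(2+t))²/(t + C) for all t ≥ 0; in particular H(t) → 0 at an algebraic rate up to logarithmic corrections. -/
set_option maxHeartbeats 1000000 in
theorem polynomial_decay (H H' : ℝ → ℝ) (c : ℝ) (hc : 0 < c)
    (hpos : ∀ t, 0 ≤ t → 0 < H t)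
    (hsmall : ∀ t, 0 ≤ t → H t ≤ 1 / Real.exp 1)
    (hderiv : ∀ t, 0 ≤ t → HasDerivAt H (H' t) t)
    (hineq : ∀ t, 0 ≤ t → H' t ≤ -c * (H t) ^ 2 / (Real.log (H t)) ^ 2) :
    ∃ C : ℝ, 0 < C ∧ ∀ t, 0 ≤ t →
      H t ≤ C * (Real.log (2 + t)) ^ 2 / (t + C) := by
  have he : (0:ℝ) < Real.exp 1 := Real.exp_pos 1
  -- log (H t) ≤ -1
  have hlog : ∀ t, 0 ≤ t → Real.log (H t) ≤ -1 := by
    intro t ht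
    have h1 : Real.log (H t) ≤ Real.log (1 / Real.exp 1) :=
      Real.log_le_log (hpos t ht) (hsmall t ht)
    rwa [one_div, Real.log_inv, Real.log_exp] at h1
  set G : ℝ → ℝ := fun t =>
    ((Real.log (H t)) ^ 2 + 2 * Real.log (H t) + 2) / H t with hGdef
  -- derivative of G
  have hGd : ∀ t, 0 ≤ t → ∃ d, HasDerivAt G d t ∧ c ≤ d := by
    intro t ht
    have hH := hpos t ht
    have hne : H t ≠ 0 := ne_of_gt hH
    have hlogd : HasDerivAt (fun s => Real.log (H s)) (H' t / H t) t :=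
      (hderiv t ht).log hne
    have hN : HasDerivAt (fun s => (Real.log (H s)) ^ 2 + 2 * Real.log (H s) + 2)
        ((2 : ℕ) * (Real.log (H t)) ^ 1 * (H' t / H t) + 2 * (H' t / H t)) t :=
      ((hlogd.pow 2).add (hlogd.const_mul 2)).add_const 2
    have hG : HasDerivAt G
        ((((2 : ℕ) * (Real.log (H t)) ^ 1 * (H' t / H t) + 2 * (H' t / H t)) * H t
          - ((Real.log (H t)) ^ 2 + 2 * Real.log (H t) + 2) * H' t) / (H t) ^ 2) t :=
      hN.div (hderiv t ht) hne
    refine ⟨_, hG, ?_⟩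
    have hL1 : Real.log (H t) ≤ -1 := hlog t ht
    have hlp : (0:ℝ) < Real.log (H t) ^ 2 := by nlinarith
    have key : ((((2 : ℕ) * (Real.log (H t)) ^ 1 * (H' t / H t) + 2 * (H' t / H t)) * H t
          - ((Real.log (H t)) ^ 2 + 2 * Real.log (H t) + 2) * H' t) / (H t) ^ 2)
          = -(H' t) * Real.log (H t) ^ 2 / (H t) ^ 2 := by
      field_simp
      ring
    have hi2 : H' t * Real.log (H t) ^ 2 ≤ -c * (H t) ^ 2 := by
      have hi := hineq t ht
      rw [le_div_iff₀ hlp] at hi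
      exact hi
    rw [key, le_div_iff₀ (by positivity : (0:ℝ) < (H t) ^ 2)]
    nlinarith
  -- monotonicity: G t - c*t is monotone on Ici 0
  have hmono : MonotoneOn (fun t => G t - c * t) (Set.Ici (0:ℝ)) := by
    apply monotoneOn_of_deriv_nonneg (convex_Ici 0)
    · intro x hx
      obtain ⟨d, hd, _⟩ := hGd x hx
      exact ((hd.sub ((hasDerivAt_id x).const_mul c)).continuousAt).continuousWithinAt
    · intro x hx
      rw [interior_Ici] at hx
      obtain ⟨d, hd, _⟩ := hGd x (le_of_lt hx)
      exact ((hd.sub ((hasDerivAt_id x).const_mul c)).differentiableAt).differentiableWithinAt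
    · intro x hx
      rw [interior_Ici] at hx
      obtain ⟨d, hd, hcd⟩ := hGd x (le_of_lt hx)
      have hdd : HasDerivAt (fun t => G t - c * t) (d - c * 1) x :=
        hd.sub ((hasDerivAt_id x).const_mul c)
      rw [hdd.deriv]
      linarith
  have hG0 : 0 < G 0 := by
    have hH0 := hpos 0 le_rfl
    have hL0 := hlog 0 le_rfl
    have : (0:ℝ) < (Real.log (H 0)) ^ 2 + 2 * Real.log (H 0) + 2 := by nlinarith
    exact div_pos this hH0
  have hGt : ∀ t, 0 ≤ t → c * t ≤ G t := by
    intro t ht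
    have := hmono (Set.mem_Ici.2 le_rfl) (Set.mem_Ici.2 ht) ht
    simp only [mul_zero, sub_zero] at this
    linarith
  -- constants
  have h24 : (0:ℝ) < 24 / c := by positivity
  obtain ⟨T, hT⟩ : ∃ T : ℝ, T = 1 + 24 / c := ⟨_, rfl⟩
  have hTpos : 0 < T := by rw [hT]; linarith
  obtain ⟨C, hCdef⟩ : ∃ C : ℝ, C = 4 * T + 2 := ⟨_, rfl⟩
  have hCpos : 0 < C := by rw [hCdef]; linarith
  have hC24 : 24 / c ≤ C := by rw [hCdef, hT]; linarith
  refine ⟨C, hCpos, ?_⟩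
  intro t ht
  have h2t : (0:ℝ) < 2 + t := by linarith
  have htC : (0:ℝ) < t + C := by linarith
  have hlog2 : (0.6931471803 : ℝ) < Real.log 2 := Real.log_two_gt_d9
  have hlogmono : Real.log 2 ≤ Real.log (2 + t) :=
    Real.log_le_log (by norm_num) (by linarith)
  rw [le_div_iff₀ htC]
  rcases le_or_gt t T with hcase | hcase
  · -- bounded region
    have hHs := hsmall t ht
    have hexp : (2.7182818283 : ℝ) < Real.exp 1 := Real.exp_one_gt_d9
    have hHe : H t * Real.exp 1 ≤ 1 := by
      rw [div_eq_inv_mul, mul_one] at hHs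
      calc H t * Real.exp 1 ≤ (Real.exp 1)⁻¹ * Real.exp 1 :=
            mul_le_mul_of_nonneg_right hHs he.le
        _ = 1 := inv_mul_cancel₀ (ne_of_gt he)
    have hlsq : (0.6931471803 : ℝ) ^ 2 ≤ (Real.log (2 + t)) ^ 2 := by nlinarith
    have hHt : H t ≤ 0.368 := by nlinarith [hpos t ht]
    have htC4 : t ≤ C / 4 := by rw [hCdef]; linarith
    nlinarith [hpos t ht]
  · -- large t
    have ht1 : (1:ℝ) ≤ t := by rw [hT] at hcase; linarith
    have hct : (24:ℝ) < c * t := by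
      have h1 : c * T < c * t := mul_lt_mul_of_pos_left hcase hc
      rw [hT, mul_add, mul_div_cancel₀ _ (ne_of_gt hc)] at h1
      nlinarith
    have hlog1 : (1:ℝ) ≤ Real.log (2 + t) := by
      rw [Real.le_log_iff_exp_le (by linarith)]
      have hexp : Real.exp 1 < 2.7182818286 := Real.exp_one_lt_d9
      linarith
    have hlsq1 : (1:ℝ) ≤ Real.log (2 + t) ^ 2 := by nlinarith
    rcases le_or_gt (H t) (((2 + t) ^ 2)⁻¹) with hsub | hsub
    · -- tiny H
      have h1 : t + C ≤ C * (2 + t) := by nlinarith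
      calc H t * (t + C) ≤ ((2 + t) ^ 2)⁻¹ * (C * (2 + t)) :=
            mul_le_mul hsub h1 htC.le (by positivity)
        _ = C / (2 + t) := by field_simp
        _ ≤ C := by rw [div_le_iff₀ h2t]; nlinarith
        _ ≤ C * Real.log (2 + t) ^ 2 := by nlinarith
    · -- moderate H
      have hL1 : Real.log (H t) ≤ -1 := hlog t ht
      have hllog : -(2 * Real.log (2 + t)) < Real.log (H t) := by
        have h2 := Real.log_lt_log (by positivity) hsub
        rw [Real.log_inv, Real.log_pow, Nat.cast_ofNat] at h2
        linarith
      have hLsq : Real.log (H t) ^ 2 ≤ 4 * Real.log (2 + t) ^ 2 := by nlinarith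
      have hGb := hGt t ht
      have hHb : H t * (c * t) ≤ Real.log (H t) ^ 2 + 2 * Real.log (H t) + 2 := by
        have hH := hpos t ht
        rw [hGdef, le_div_iff₀ hH] at hGb
        nlinarith
      have hL2 : (1:ℝ) ≤ Real.log (H t) ^ 2 := by nlinarith
      have h12 : H t * (c * t) ≤ 12 * Real.log (2 + t) ^ 2 := by nlinarith
      have hcc : 12 * (t + C) ≤ C * (c * t) := by
        have h1 : 24 ≤ C * c := by
          rw [div_le_iff₀ hc] at hC24
          linarith
        nlinarith
      have hmul : H t * (t + C) * (c * t) ≤ C * Real.log (2 + t) ^ 2 * (c * t) := by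
        nlinarith [sq_nonneg (Real.log (2 + t)), hpos t ht]
      exact le_of_mul_le_mul_right hmul (by nlinarith)
end

section
/- Truncated-log inequality: define L(x) = log x for e^{-2} ≤ x ≤ e², L(x) = 2 for x ≥ e², L(x) = -2 for x ≤ e^{-2}. Then for all a > 0, b > 0, (a-b)·L(a/b) ≥ (a-b)²/(a+b). -/
/-!
Put `t = a / b`; by homogeneity it suffices to show `(t - 1)² / (t + 1) ≤ (t - 1) · L(t)`,
i.e. that `L(t)` lies on the same side of `(t - 1) / (t + 1)` as `t` lies of `1`. For the
logarithm this follows from `1 - 1/t ≤ log t ≤ t - 1`, and the truncation values `±2` are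
harmless because `|(t - 1) / (t + 1)| < 1`.
-/

/-- The natural logarithm truncated at ±2. -/
noncomputable def truncLog (x : ℝ) : ℝ :=
  if x ≥ Real.exp 2 then 2
  else if x ≤ Real.exp (-2) then -2
  else Real.log x

open Real

lemma sub_one_div_add_one_le_log {t : ℝ} (ht : 1 ≤ t) : (t - 1) / (t + 1) ≤ log t := calc
  (t - 1) / (t + 1) ≤ (t - 1) / t :=
    div_le_div_of_nonneg_left (by linarith) (by linarith) (by linarith)
  _ = 1 - t⁻¹ := by field_simp
  _ ≤ log t := one_sub_inv_le_log_of_pos (by linarith)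

lemma log_le_sub_one_div_add_one {t : ℝ} (h0 : 0 < t) (ht : t ≤ 1) :
    log t ≤ (t - 1) / (t + 1) := calc
  log t ≤ t - 1 := log_le_sub_one_of_pos h0
  _ ≤ (t - 1) / (t + 1) := by
    rw [le_div_iff₀ (by linarith)]
    nlinarith

lemma sub_one_div_add_one_le_truncLog {t : ℝ} (ht : 1 ≤ t) :
    (t - 1) / (t + 1) ≤ truncLog t := by
  have hexp : exp (-2) < 1 := exp_lt_one_iff.mpr (by norm_num)
  unfold truncLog
  split_ifs with h_top h_bot
  · rw [div_le_iff₀ (by linarith)]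
    linarith
  · linarith
  · exact sub_one_div_add_one_le_log ht

lemma truncLog_le_sub_one_div_add_one {t : ℝ} (h0 : 0 < t) (ht : t ≤ 1) :
    truncLog t ≤ (t - 1) / (t + 1) := by
  have hexp : 1 < exp 2 := one_lt_exp_iff.mpr (by norm_num)
  unfold truncLog
  split_ifs with h_top h_bot
  · linarith
  · rw [le_div_iff₀ (by linarith)]
    linarith
  · exact log_le_sub_one_div_add_one h0 ht

lemma sq_sub_one_div_add_one_le_mul {t c : ℝ}
    (h_above : 1 ≤ t → (t - 1) / (t + 1) ≤ c)
    (h_below : t ≤ 1 → c ≤ (t - 1) / (t + 1)) :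
    (t - 1) ^ 2 / (t + 1) ≤ (t - 1) * c := by
  rw [sq, mul_div_assoc]
  rcases le_total 1 t with ht | ht
  · exact mul_le_mul_of_nonneg_left (h_above ht) (by linarith)
  · exact mul_le_mul_of_nonpos_left (h_below ht) (by linarith)

lemma sq_sub_one_div_add_one_le_mul_truncLog {t : ℝ} (h0 : 0 < t) :
    (t - 1) ^ 2 / (t + 1) ≤ (t - 1) * truncLog t :=
  sq_sub_one_div_add_one_le_mul sub_one_div_add_one_le_truncLog
    (truncLog_le_sub_one_div_add_one h0)

theorem truncated_log_inequality (a b : ℝ) (ha : 0 < a) (hb : 0 < b) :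
    (a - b) * truncLog (a / b) ≥ (a - b)^2 / (a + b) := by
  obtain ⟨t, ht, rfl⟩ : ∃ t, 0 < t ∧ a = t * b :=
    ⟨a / b, div_pos ha hb, (div_mul_cancel₀ a hb.ne').symm⟩
  have h_lhs : (t * b - b) * truncLog (t * b / b) = b * ((t - 1) * truncLog t) := by
    rw [mul_div_cancel_right₀ t hb.ne']
    ring
  have h_rhs : (t * b - b) ^ 2 / (t * b + b) = b * ((t - 1) ^ 2 / (t + 1)) := by
    field_simp
  rw [ge_iff_le, h_lhs, h_rhs]
  exact mul_le_mul_of_nonneg_left (sq_sub_one_div_add_one_le_mul_truncLog ht) hb.le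
end
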